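/- In a bounded modular lattice, if z = x ⊕ y, w = u ⊕ v, z ∧ w = x ∧ u, x is perspective to u, and y is perspective to v, then z is perspective to w. -/
import Mathlib


/-- `a` and `b` are perspective via some axis `c`. -/
def Persp {α : Type*} [Lattice α] (a b : α) : Prop :=
  ∃ c, a ⊔ b = a ⊔ c ∧ a ⊔ b = b ⊔ c ∧ a ⊓ b = a ⊓ c ∧ a ⊓ b = b ⊓ c

/-- In a bounded modular lattice, if `z = x ⊕ y`, `w = u ⊕ v`,
`z ⊓ w = x ⊓ u`, `x ∼ u`, and `y ∼ v`, then `z ∼ w`. -/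
theorem stmt6 {α : Type*} [Lattice α] [BoundedOrder α] [IsModularLattice α]
    (x y z u v w : α)
    (hz : z = x ⊔ y) (hxy : x ⊓ y = ⊥)
    (hw : w = u ⊔ v) (huv : u ⊓ v = ⊥)
    (h : z ⊓ w = x ⊓ u)
    (hxu : Persp x u) (hyv : Persp y v) :
    Persp z w := by
  subst hz hw
  obtain ⟨c, hc1, hc2, hc3, hc4⟩ := hxu
  obtain ⟨d, hd1, hd2, hd3, hd4⟩ := hyv
  set z := x ⊔ y with hz
  set w := u ⊔ v with hw
  set t := x ⊓ u with ht
  have htx : t ≤ x := inf_le_left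
  have htu : t ≤ u := inf_le_right
  have htz : t ≤ z := htx.trans le_sup_left
  have htw : t ≤ w := htu.trans le_sup_left
  have htc : t ≤ c := hc3 ▸ inf_le_right
  -- small meets
  have hyv0 : y ⊓ v = ⊥ := by
    have h1 : y ⊓ v ≤ t := h ▸ inf_le_inf le_sup_right le_sup_right
    have h2 : y ⊓ v ≤ x ⊓ y := le_inf (h1.trans htx) inf_le_left
    exact le_bot_iff.mp (hxy ▸ h2)
  have hyd0 : y ⊓ d = ⊥ := hyv0 ▸ hd3.symm
  have hvd0 : v ⊓ d = ⊥ := hyv0 ▸ hd4.symm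
  have hyw0 : y ⊓ w = ⊥ := by
    have h1 : y ⊓ w ≤ t := h ▸ inf_le_inf le_sup_right le_rfl
    have h2 : y ⊓ w ≤ x ⊓ y := le_inf (h1.trans htx) inf_le_left
    exact le_bot_iff.mp (hxy ▸ h2)
  have hvz0 : v ⊓ z = ⊥ := by
    have h1 : v ⊓ z ≤ t := h ▸ le_inf inf_le_right (inf_le_left.trans le_sup_right)
    have h2 : v ⊓ z ≤ u ⊓ v := le_inf (h1.trans htu) inf_le_left
    exact le_bot_iff.mp (huv ▸ h2)
  have huz : u ⊓ z = t := by
    apply le_antisymm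
    · exact h ▸ le_inf inf_le_right (inf_le_left.trans le_sup_left)
    · exact le_inf htu htz
  -- shrunk axes
  set c₁ := c ⊓ (x ⊔ u) with hc₁
  set d₁ := d ⊓ (y ⊔ v) with hd₁
  have hxc₁ : x ⊔ c₁ = x ⊔ u := by
    rw [hc₁, sup_comm x _, inf_comm c _,
      inf_sup_assoc_of_le c (le_sup_left : x ≤ x ⊔ u), sup_comm c x, ← hc1, inf_idem]
  have huc₁ : u ⊔ c₁ = x ⊔ u := by
    rw [hc₁, sup_comm u _, inf_comm c _,
      inf_sup_assoc_of_le c (le_sup_right : u ≤ x ⊔ u), sup_comm c u, ← hc2, inf_idem]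
  have hxc₁i : x ⊓ c₁ = t := by
    rw [hc₁, ← inf_assoc, ← hc3]
    exact inf_eq_left.mpr (htx.trans le_sup_left)
  have huc₁i : u ⊓ c₁ = t := by
    rw [hc₁, ← inf_assoc, ← hc4]
    exact inf_eq_left.mpr (htx.trans le_sup_left)
  have htc₁ : t ≤ c₁ := le_inf htc (htx.trans le_sup_left)
  have hyd₁ : y ⊔ d₁ = y ⊔ v := by
    rw [hd₁, sup_comm y _, inf_comm d _,
      inf_sup_assoc_of_le d (le_sup_left : y ≤ y ⊔ v), sup_comm d y, ← hd1, inf_idem]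
  have hvd₁ : v ⊔ d₁ = y ⊔ v := by
    rw [hd₁, sup_comm v _, inf_comm d _,
      inf_sup_assoc_of_le d (le_sup_right : v ≤ y ⊔ v), sup_comm d v, ← hd2, inf_idem]
  have hyd₁i : y ⊓ d₁ = ⊥ := by
    rw [hd₁, ← inf_assoc, hyd0, bot_inf_eq]
  have hvd₁i : v ⊓ d₁ = ⊥ := by
    rw [hd₁, ← inf_assoc, hvd0, bot_inf_eq]
  -- regrouping independence: (x ⊔ u) ⊓ (y ⊔ v) = ⊥
  have hzuw : (z ⊔ u) ⊓ w = u := by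
    rw [sup_comm z u, sup_inf_assoc_of_le z (le_sup_left : u ≤ w), h]
    exact sup_eq_left.mpr htu
  have hyuz : (y ⊔ u) ⊓ z = y ⊔ t := by
    rw [sup_inf_assoc_of_le u (le_sup_right : y ≤ z)]
    exact congrArg (y ⊔ ·) huz
  have hxyu : x ⊓ (y ⊔ u) ≤ t := by
    have h1 : x ⊓ (y ⊔ u) ≤ (y ⊔ u) ⊓ z :=
      le_inf inf_le_right (inf_le_left.trans le_sup_left)
    rw [hyuz] at h1
    have h2 : x ⊓ (y ⊔ u) ≤ x ⊓ (t ⊔ y) :=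
      le_inf inf_le_left (h1.trans_eq (sup_comm y t))
    have h3 : (t ⊔ y) ⊓ x = t := by
      rw [sup_inf_assoc_of_le y htx, inf_comm y x, hxy, sup_bot_eq]
    rw [inf_comm x (t ⊔ y)] at h2
    exact h2.trans_eq h3
  have hxuyu : (x ⊔ u) ⊓ (y ⊔ u) = u := by
    rw [sup_comm x u, sup_inf_assoc_of_le x (le_sup_right : u ≤ y ⊔ u)]
    exact sup_eq_left.mpr (hxyu.trans htu)
  have hwyv : w ⊓ (y ⊔ v) = v := by
    rw [inf_comm, sup_comm y v, sup_inf_assoc_of_le y (le_sup_right : v ≤ w), hyw0,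
      sup_bot_eq]
  have hPQ : (x ⊔ u) ⊓ (y ⊔ v) = ⊥ := by
    have hg1 : (x ⊔ u) ⊓ (y ⊔ v) ≤ y ⊔ u := by
      have : (x ⊔ u) ⊓ (y ⊔ v) ≤ (y ⊔ w) ⊓ (z ⊔ u) :=
        le_inf (inf_le_right.trans (sup_le_sup_left le_sup_right y))
          (inf_le_left.trans (sup_le_sup_right le_sup_left u))
      rwa [sup_inf_assoc_of_le w (le_sup_right.trans le_sup_left : y ≤ z ⊔ u),
        inf_comm w _, hzuw] at this
    have hg2 : (x ⊔ u) ⊓ (y ⊔ v) ≤ u :=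
      (le_inf inf_le_left hg1).trans_eq hxuyu
    have hg3 : (x ⊔ u) ⊓ (y ⊔ v) ≤ v := by
      have := le_inf (hg2.trans (le_sup_left : u ≤ w)) (inf_le_right (a := x ⊔ u) (b := y ⊔ v))
      exact this.trans_eq hwyv
    exact le_bot_iff.mp ((le_inf hg2 hg3).trans_eq huv)
  -- helper inequalities for the axis e = c₁ ⊔ d₁
  have hd₁Q : d₁ ≤ y ⊔ v := hd₁.le.trans inf_le_right
  have hd₁d : d₁ ≤ d := hd₁.le.trans inf_le_left
  have hc₁P : c₁ ≤ x ⊔ u := hc₁.le.trans inf_le_right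
  have hc₁c : c₁ ≤ c := hc₁.le.trans inf_le_left
  have hzyv : z ⊓ (y ⊔ v) = y := by
    rw [inf_comm, sup_inf_assoc_of_le v (le_sup_right : y ≤ z), hvz0, sup_bot_eq]
  have hzd₁ : z ⊓ d₁ = ⊥ := le_bot_iff.mp <| calc
    z ⊓ d₁ ≤ z ⊓ (y ⊔ v) ⊓ d :=
        le_inf (le_inf inf_le_left (inf_le_right.trans hd₁Q)) (inf_le_right.trans hd₁d)
    _ = y ⊓ d := by rw [hzyv]
    _ = ⊥ := hyd0
  have hwd₁ : w ⊓ d₁ = ⊥ := le_bot_iff.mp <| calc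
    w ⊓ d₁ ≤ w ⊓ (y ⊔ v) ⊓ d :=
        le_inf (le_inf inf_le_left (inf_le_right.trans hd₁Q)) (inf_le_right.trans hd₁d)
    _ = v ⊓ d := by rw [hwyv]
    _ = ⊥ := hvd0
  have hxQP : (x ⊔ (y ⊔ v)) ⊓ (x ⊔ u) = x := by
    rw [sup_inf_assoc_of_le (y ⊔ v) (le_sup_left : x ≤ x ⊔ u),
      inf_comm (y ⊔ v) (x ⊔ u), hPQ, sup_bot_eq]
  have hzd₁P : (z ⊔ d₁) ⊓ (x ⊔ u) ≤ x :=
    (inf_le_inf_right _ (sup_le (sup_le le_sup_left (le_sup_left.trans le_sup_right))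
      (hd₁Q.trans le_sup_right))).trans_eq hxQP
  have hc₁zd : c₁ ⊓ (z ⊔ d₁) ≤ t := by
    have h1 : c₁ ⊓ (z ⊔ d₁) ≤ x := (le_inf inf_le_right (inf_le_left.trans hc₁P)).trans hzd₁P
    exact (le_inf h1 (inf_le_left.trans hc₁c)).trans_eq hc3.symm
  have hze : z ⊓ (c₁ ⊔ d₁) = t := by
    apply le_antisymm
    · have h1 : z ⊓ (c₁ ⊔ d₁) ≤ d₁ ⊔ t := by
        calc z ⊓ (c₁ ⊔ d₁) ≤ (d₁ ⊔ c₁) ⊓ (z ⊔ d₁) :=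
            le_inf (inf_le_right.trans_eq (sup_comm c₁ d₁)) (inf_le_left.trans le_sup_left)
          _ = d₁ ⊔ c₁ ⊓ (z ⊔ d₁) := sup_inf_assoc_of_le c₁ (le_sup_right : d₁ ≤ z ⊔ d₁)
          _ ≤ d₁ ⊔ t := sup_le_sup_left hc₁zd d₁
      have h2 : z ⊓ (d₁ ⊔ t) ≤ t := by
        rw [inf_comm, sup_comm d₁ t, sup_inf_assoc_of_le d₁ htz, inf_comm d₁ z, hzd₁,
          sup_bot_eq]
      exact (le_inf inf_le_left h1).trans h2
    · exact le_inf htz (htc₁.trans le_sup_left)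
  have huQP : (u ⊔ (y ⊔ v)) ⊓ (x ⊔ u) = u := by
    rw [sup_inf_assoc_of_le (y ⊔ v) (le_sup_right : u ≤ x ⊔ u),
      inf_comm (y ⊔ v) (x ⊔ u), hPQ, sup_bot_eq]
  have hwd₁P : (w ⊔ d₁) ⊓ (x ⊔ u) ≤ u :=
    (inf_le_inf_right _ (sup_le (sup_le le_sup_left (le_sup_right.trans le_sup_right))
      (hd₁Q.trans le_sup_right))).trans_eq huQP
  have hc₁wd : c₁ ⊓ (w ⊔ d₁) ≤ t := by
    have h1 : c₁ ⊓ (w ⊔ d₁) ≤ u := (le_inf inf_le_right (inf_le_left.trans hc₁P)).trans hwd₁P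
    exact (le_inf h1 (inf_le_left.trans hc₁c)).trans_eq hc4.symm
  have hwe : w ⊓ (c₁ ⊔ d₁) = t := by
    apply le_antisymm
    · have h1 : w ⊓ (c₁ ⊔ d₁) ≤ d₁ ⊔ t := by
        calc w ⊓ (c₁ ⊔ d₁) ≤ (d₁ ⊔ c₁) ⊓ (w ⊔ d₁) :=
            le_inf (inf_le_right.trans_eq (sup_comm c₁ d₁)) (inf_le_left.trans le_sup_left)
          _ = d₁ ⊔ c₁ ⊓ (w ⊔ d₁) := sup_inf_assoc_of_le c₁ (le_sup_right : d₁ ≤ w ⊔ d₁)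
          _ ≤ d₁ ⊔ t := sup_le_sup_left hc₁wd d₁
      have h2 : w ⊓ (d₁ ⊔ t) ≤ t := by
        rw [inf_comm, sup_comm d₁ t, sup_inf_assoc_of_le d₁ htw, inf_comm d₁ w, hwd₁,
          sup_bot_eq]
      exact (le_inf inf_le_left h1).trans h2
    · exact le_inf htw (htc₁.trans le_sup_left)
  have hjz : z ⊔ (c₁ ⊔ d₁) = z ⊔ w := by
    rw [hz, hw, sup_sup_sup_comm x y c₁ d₁, hxc₁, hyd₁, sup_sup_sup_comm x y u v]
  have hjw : w ⊔ (c₁ ⊔ d₁) = z ⊔ w := by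
    rw [hz, hw, sup_sup_sup_comm u v c₁ d₁, huc₁, hvd₁, sup_sup_sup_comm x y u v]
  exact ⟨c₁ ⊔ d₁, hjz.symm, hjw.symm, h.trans hze.symm, h.trans hwe.symm⟩
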